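/- arXiv:1201.2386 — 2 statements merged into one kernel-verified Lean document; each statement's English description precedes it below -/
import Mathlib

section
/- Let B(x) be a J × J matrix with entries in F_2[x]/(x^N - 1). Then wt(perm(B(x))) ≤ perm(wt(B(x))), where wt(B(x)) is the integer matrix of entry-wise weights and the right-hand permanent is computed over the integers. -/
open Polynomial

/-- The quotient ring `F₂[x]/(x^N - 1)`. -/
noncomputable abbrev Rq (N : ℕ) : Type := AdjoinRoot (X ^ N - C 1 : (ZMod 2)[X])

/-- The weight of an element of `F₂[x]/(x^N - 1)`: the number of nonzero coefficients
of its canonical representative of degree `< N`. -/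
noncomputable def wt {N : ℕ} (hN : N ≠ 0) (a : Rq N) : ℕ :=
  ((AdjoinRoot.modByMonicHom (Polynomial.monic_X_pow_sub_C (1 : ZMod 2) hN) a).support).card

/-- The permanent of a square matrix over a commutative semiring. -/
def perm {R : Type*} [CommSemiring R] {n : ℕ} (B : Matrix (Fin n) (Fin n) R) : R :=
  ∑ σ : Equiv.Perm (Fin n), ∏ j, B j (σ j)

lemma wt_mk_le {N : ℕ} (hN : N ≠ 0) (p : (ZMod 2)[X]) :
    wt hN (AdjoinRoot.mk _ p) ≤ p.support.card := by
  set q : (ZMod 2)[X] := X ^ N - C 1 with hq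
  have hmon := Polynomial.monic_X_pow_sub_C (1 : ZMod 2) hN
  set F : (ZMod 2)[X] := ∑ k ∈ p.support, Polynomial.monomial (k % N) (p.coeff k) with hF
  have hdegq : q.degree = N := by
    simpa [hq] using Polynomial.degree_X_pow_sub_C (Nat.pos_of_ne_zero hN) (1 : ZMod 2)
  have hdegF : F.degree < q.degree := by
    rw [hdegq]
    apply lt_of_le_of_lt (Polynomial.degree_sum_le _ _)
    apply Finset.sup_lt_iff (by exact_mod_cast WithBot.bot_lt_coe N) |>.2
    intro k _
    apply lt_of_le_of_lt (Polynomial.degree_monomial_le _ _)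
    exact_mod_cast Nat.mod_lt k (Nat.pos_of_ne_zero hN)
  have hrootN : (AdjoinRoot.root q) ^ N = 1 := by
    have := AdjoinRoot.eval₂_root q
    have h : (AdjoinRoot.root q) ^ N - 1 = 0 := by
      simpa [hq] using this
    linear_combination h
  have hmk : AdjoinRoot.mk q F = AdjoinRoot.mk q p := by
    conv_rhs => rw [p.as_sum_support]
    rw [hF, map_sum, map_sum]
    refine Finset.sum_congr rfl fun k _ => ?_
    have h1 : ∀ m c, AdjoinRoot.mk q (Polynomial.monomial m c)
        = AdjoinRoot.mk q (C c) * (AdjoinRoot.root q) ^ m := by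
      intro m c
      rw [← Polynomial.C_mul_X_pow_eq_monomial, map_mul, map_pow, AdjoinRoot.mk_X]
    rw [h1, h1]
    congr 1
    conv_rhs => rw [← Nat.div_add_mod k N]
    rw [pow_add, pow_mul, hrootN, one_pow, one_mul]
  have hwt : wt hN (AdjoinRoot.mk _ p) = F.support.card := by
    unfold wt
    rw [← hmk, AdjoinRoot.modByMonicHom_mk, (Polynomial.modByMonic_eq_self_iff hmon).2 hdegF]
  rw [hwt]
  calc F.support.card ≤ (p.support.image (· % N)).card := by
        apply Finset.card_le_card
        intro n hn
        rw [Polynomial.mem_support_iff, hF, Polynomial.finset_sum_coeff] at hn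
        obtain ⟨k, hk, hne⟩ := Finset.exists_ne_zero_of_sum_ne_zero hn
        rw [Polynomial.coeff_monomial] at hne
        rcases eq_or_ne (k % N) n with h | h
        · exact Finset.mem_image.2 ⟨k, hk, h⟩
        · simp [h] at hne
    _ ≤ p.support.card := Finset.card_image_le

lemma mk_wt {N : ℕ} (hN : N ≠ 0) (a : Rq N) :
    AdjoinRoot.mk _ (AdjoinRoot.modByMonicHom
      (Polynomial.monic_X_pow_sub_C (1 : ZMod 2) hN) a) = a :=
  AdjoinRoot.mk_leftInverse _ a

lemma wt_add_le {N : ℕ} (hN : N ≠ 0) (a b : Rq N) :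
    wt hN (a + b) ≤ wt hN a + wt hN b := by
  set h := Polynomial.monic_X_pow_sub_C (1 : ZMod 2) hN
  have : a + b = AdjoinRoot.mk _ (AdjoinRoot.modByMonicHom h a + AdjoinRoot.modByMonicHom h b) := by
    rw [map_add, mk_wt hN, mk_wt hN]
  rw [this]
  refine (wt_mk_le hN _).trans ?_
  refine (Finset.card_le_card (Polynomial.support_add)).trans ?_
  exact Finset.card_union_le _ _

lemma wt_mul_le {N : ℕ} (hN : N ≠ 0) (a b : Rq N) :
    wt hN (a * b) ≤ wt hN a * wt hN b := by
  set h := Polynomial.monic_X_pow_sub_C (1 : ZMod 2) hN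
  have : a * b = AdjoinRoot.mk _ (AdjoinRoot.modByMonicHom h a * AdjoinRoot.modByMonicHom h b) := by
    rw [map_mul, mk_wt hN, mk_wt hN]
  rw [this]
  exact (wt_mk_le hN _).trans Polynomial.card_support_mul_le

lemma wt_one_le {N : ℕ} (hN : N ≠ 0) : wt hN (1 : Rq N) ≤ 1 := by
  have : (1 : Rq N) = AdjoinRoot.mk _ (1 : (ZMod 2)[X]) := by simp
  rw [this]
  refine (wt_mk_le hN _).trans ?_
  simpa using Polynomial.card_support_le_one_iff_monomial.2 ⟨0, 1, by simp⟩

lemma wt_sum_le {N : ℕ} (hN : N ≠ 0) {ι : Type*} (s : Finset ι) (f : ι → Rq N) :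
    wt hN (∑ i ∈ s, f i) ≤ ∑ i ∈ s, wt hN (f i) := by
  induction s using Finset.cons_induction with
  | empty => simp [wt]
  | cons i s hi ih =>
    rw [Finset.sum_cons, Finset.sum_cons]
    exact (wt_add_le hN _ _).trans (Nat.add_le_add_left ih _)

lemma wt_prod_le {N : ℕ} (hN : N ≠ 0) {ι : Type*} (s : Finset ι) (f : ι → Rq N) :
    wt hN (∏ i ∈ s, f i) ≤ ∏ i ∈ s, wt hN (f i) := by
  induction s using Finset.cons_induction with
  | empty => simpa using wt_one_le hN
  | cons i s hi ih =>
    rw [Finset.prod_cons, Finset.prod_cons]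
    exact (wt_mul_le hN _ _).trans (Nat.mul_le_mul_left _ ih)


/-- For a `J × J` matrix `B(x)` over `F₂[x]/(x^N - 1)`, the weight of the permanent
is at most the permanent (over the integers/naturals) of the entry-wise weight matrix. -/
theorem wt_perm_le_perm_wt {N J : ℕ} (hN : N ≠ 0) (B : Matrix (Fin J) (Fin J) (Rq N)) :
    wt hN (perm B) ≤ perm (Matrix.of fun j i => (wt hN (B j i) : ℕ)) := by
  unfold perm
  refine (wt_sum_le hN _ _).trans (Finset.sum_le_sum fun σ _ => ?_)
  exact wt_prod_le hN _ _
end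

section
/- Let R be a finite commutative ring with unity and A an N × N matrix over R. Then det(A) is zero or a zero divisor in R if and only if the set of row vectors of A is dependent, i.e., there exist scalars r_0,...,r_{N-1} ∈ R, not all zero, with Σ_i r_i v_i = 0 where v_i are the rows of A. -/
/-!
Over a finite ring, injectivity and surjectivity of `v ↦ v ᵥ* A` on the finite set `Rⁿ`
coincide. The rows of `A` are independent exactly when this map is injective, and it is
surjective exactly when `A` is invertible, i.e. when `det A` is a unit. Finally, in a finite
commutative ring the units are precisely the non-zero-divisors.
-/

open scoped nonZeroDivisors

theorem eq_zero_or_zeroDivisor_iff_notMem_nonZeroDivisors {M₀ : Type*} [CommMonoidWithZero M₀]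
    [Nontrivial M₀] {a : M₀} :
    (a = 0 ∨ (a ≠ 0 ∧ ∃ b : M₀, b ≠ 0 ∧ a * b = 0)) ↔ a ∉ M₀⁰ := by
  constructor
  · rintro (rfl | ⟨-, b, hb, hab⟩)
    · exact zero_notMem_nonZeroDivisors
    · exact notMem_nonZeroDivisors_iff_left.mpr ⟨b, hab, hb⟩
  · intro ha
    obtain ⟨b, hab, hb⟩ := notMem_nonZeroDivisors_iff_left.mp ha
    by_cases ha0 : a = 0
    · exact Or.inl ha0
    · exact Or.inr ⟨ha0, b, hb, hab⟩

namespace Matrix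

variable {m R : Type*} [Fintype m] [DecidableEq m] [CommRing R] [Finite R]

theorem vecMul_injective_iff_isUnit_of_finite {A : Matrix m m R} :
    Function.Injective A.vecMul ↔ IsUnit A := by
  rw [← vecMul_surjective_iff_isUnit]
  exact Finite.injective_iff_surjective

theorem linearIndependent_rows_iff_det_mem_nonZeroDivisors {A : Matrix m m R} :
    LinearIndependent R A.row ↔ A.det ∈ R⁰ := by
  rw [← vecMul_injective_iff, vecMul_injective_iff_isUnit_of_finite, isUnit_iff_isUnit_det,
    isUnit_iff_mem_nonZeroDivisors_of_finite]

end Matrix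

/-- For a square matrix `A` over a finite commutative ring with unity, `det(A)` is
zero or a zero divisor if and only if the rows of `A` are dependent, i.e., some
nontrivial linear combination of the rows is zero. -/
theorem det_zero_or_zeroDivisor_iff_rows_dependent
    {R : Type*} [CommRing R] [Fintype R] [Nontrivial R] {n : ℕ}
    (A : Matrix (Fin n) (Fin n) R) :
    (A.det = 0 ∨ (A.det ≠ 0 ∧ ∃ b : R, b ≠ 0 ∧ A.det * b = 0)) ↔
      ∃ r : Fin n → R, r ≠ 0 ∧ ∑ i, r i • A i = 0 := by
  rw [eq_zero_or_zeroDivisor_iff_notMem_nonZeroDivisors,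
    ← Matrix.linearIndependent_rows_iff_det_mem_nonZeroDivisors, Fintype.not_linearIndependent_iff]
  exact ⟨fun ⟨r, hsum, hr⟩ => ⟨r, Function.ne_iff.mpr hr, hsum⟩,
    fun ⟨r, hr, hsum⟩ => ⟨r, hsum, Function.ne_iff.mp hr⟩⟩
end
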